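/- Let 0 < q < 1, s < 2, C₁ = 2(1+q⁻¹)²(1 − q^{(2−s)/2})⁻¹. If the numbers of samples M_l (l = 2, …, L) satisfy M_l ≥ C₁ q^{(s+2)(l−1)/2 + 2(1−L)} and M₁ ≥ 12(Tol₁²/4 + V[u]) Tol⁻², then (1/2)(1 + (1+q⁻¹)² Σ_{l=2}^L M_l⁻¹ q^{2(l−L)}) Tol² + 3 M₁⁻¹ (Tol₁²/4 + V[u]) < Tol², i.e. the MLMC error bound is strictly below Tol². -/

import Mathlib

open Real Finset

/-!
With `θ = q^{(2-s)/2} < 1`, the lower bound on `M_l` makes the `l`-th term of the level sum at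
most `θ^{l-1} (1 - θ) / (2 (1 + q⁻¹)²)`, so the geometric series bounds the whole first summand
by `(1 + θ/2) Tol² / 2`. The bound on `M₁` makes the second summand at most `Tol² / 4`, and
`3/4 + θ/4 < 1`.
-/

lemma Finset.sum_Icc_two_eq_sum_Ico_one {M : Type*} [AddCommMonoid M] (f : ℕ → M) (L : ℕ) :
    ∑ l ∈ Icc 2 L, f l = ∑ k ∈ Ico 1 L, f (k + 1) := by
  rw [← Ico_add_one_right_eq_Icc, sum_Ico_add' f 1 L 1]

lemma inv_mul_le_of_div_le {a b m : ℝ} (hm : 0 ≤ m) (hb : 0 < b) (h : a / b ≤ m) :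
    m⁻¹ * a ≤ b := by
  rcases hm.eq_or_lt with rfl | hm
  · simpa using hb.le
  · rw [inv_mul_le_iff₀ hm]
    exact (div_le_iff₀ hb).1 h

lemma inv_mul_mul_le_of_mul_le {c y m t : ℝ} (hc : 0 < c) (hy : 0 < y) (ht : 0 ≤ t)
    (h : c * y ≤ m) : m⁻¹ * (y * t) ≤ c⁻¹ * t := by
  calc m⁻¹ * (y * t) ≤ (c * y)⁻¹ * (y * t) :=
        mul_le_mul_of_nonneg_right (inv_anti₀ (by positivity) h) (by positivity)
    _ = c⁻¹ * t := by field_simp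

lemma rpow_two_mul_sub_eq_rpow_mul_pow {q : ℝ} (hq : 0 < q) (s : ℝ) (L k : ℕ) :
    q ^ (2 * (((k + 1 : ℕ) : ℝ) - L)) =
      q ^ ((s + 2) / 2 * (((k + 1 : ℕ) : ℝ) - 1) + 2 * (1 - (L : ℝ))) * (q ^ ((2 - s) / 2)) ^ k := by
  rw [← Real.rpow_natCast (q ^ _), ← Real.rpow_mul hq.le, ← Real.rpow_add hq]
  congr 1
  push_cast
  ring

lemma level_sum_le (L : ℕ) {q s : ℝ} (hq : 0 < q) (hq1 : q < 1) (hs : s < 2) (M : ℕ → ℕ)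
    (hMl : ∀ l, 2 ≤ l → l ≤ L →
      2 * (1 + q⁻¹) ^ 2 * (1 - q ^ ((2 - s) / 2))⁻¹
          * q ^ ((s + 2) / 2 * ((l : ℝ) - 1) + 2 * (1 - (L : ℝ))) ≤ (M l : ℝ)) :
    (1 + q⁻¹) ^ 2 * ∑ l ∈ Icc 2 L, (M l : ℝ)⁻¹ * q ^ (2 * ((l : ℝ) - L))
      ≤ q ^ ((2 - s) / 2) / 2 := by
  set A := (1 + q⁻¹) ^ 2
  set θ := q ^ ((2 - s) / 2)
  have hA : 0 < A := by positivity
  have hθ0 : 0 < θ := Real.rpow_pos_of_pos hq _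
  have hθ1 : θ < 1 := Real.rpow_lt_one hq.le hq1 (by linarith)
  have hc : 0 < 2 * A * (1 - θ)⁻¹ := by
    have : 0 < 1 - θ := by linarith
    positivity
  have hterm : ∀ k ∈ Ico 1 L, (M (k + 1) : ℝ)⁻¹ * q ^ (2 * (((k + 1 : ℕ) : ℝ) - L))
      ≤ (2 * A * (1 - θ)⁻¹)⁻¹ * θ ^ k := by
    intro k hk
    rw [rpow_two_mul_sub_eq_rpow_mul_pow hq s]
    exact inv_mul_mul_le_of_mul_le hc (Real.rpow_pos_of_pos hq _) (by positivity)
      (hMl (k + 1) (by simp at hk; omega) (by simp at hk; omega))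
  calc A * ∑ l ∈ Icc 2 L, (M l : ℝ)⁻¹ * q ^ (2 * ((l : ℝ) - L))
      ≤ A * ((2 * A * (1 - θ)⁻¹)⁻¹ * ∑ k ∈ Ico 1 L, θ ^ k) := by
        refine mul_le_mul_of_nonneg_left ?_ hA.le
        rw [sum_Icc_two_eq_sum_Ico_one, mul_sum]
        exact sum_le_sum hterm
    _ ≤ A * ((2 * A * (1 - θ)⁻¹)⁻¹ * (θ ^ 1 / (1 - θ))) := by
        gcongr
        exact geom_sum_Ico_le_of_lt_one hθ0.le hθ1
    _ = θ / 2 := by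
        have : 1 - θ ≠ 0 := by linarith
        field_simp

theorem stmt_9_general (L : ℕ) (q s Tol Vu : ℝ)
    (hq : 0 < q) (hq1 : q < 1) (hs : s < 2) (hTol : 0 < Tol)
    (M : ℕ → ℕ)
    (hM1 : 12 * ((q ^ ((1 : ℝ) - L) * Tol) ^ 2 / 4 + Vu) / Tol ^ 2 ≤ (M 1 : ℝ))
    (hMl : ∀ l, 2 ≤ l → l ≤ L →
      2 * (1 + q⁻¹) ^ 2 * (1 - q ^ ((2 - s) / 2))⁻¹
          * q ^ ((s + 2) / 2 * ((l : ℝ) - 1) + 2 * (1 - (L : ℝ))) ≤ (M l : ℝ)) :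
    1 / 2 * (1 + (1 + q⁻¹) ^ 2
        * ∑ l ∈ Finset.Icc 2 L, (M l : ℝ)⁻¹ * q ^ (2 * ((l : ℝ) - L))) * Tol ^ 2
      + 3 * (M 1 : ℝ)⁻¹ * ((q ^ ((1 : ℝ) - L) * Tol) ^ 2 / 4 + Vu) < Tol ^ 2 := by
  have hTol2 : 0 < Tol ^ 2 := by positivity
  have hlevels := mul_le_mul_of_nonneg_right (level_sum_le L hq hq1 hs M hMl) hTol2.le
  have hθ1 : q ^ ((2 - s) / 2) < 1 := Real.rpow_lt_one hq.le hq1 (by linarith)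
  have hsecond := inv_mul_le_of_div_le (Nat.cast_nonneg (M 1)) hTol2 hM1
  linarith [mul_lt_mul_of_pos_right hθ1 hTol2]

/-- For `s < 2` and sample numbers `M_l ≥ C₁ q^{(s+2)(l−1)/2 + 2(1−L)}`
(`l ≥ 2`) with `C₁ = 2(1+q⁻¹)²(1 − q^{(2−s)/2})⁻¹` and
`M₁ ≥ 12(Tol₁²/4 + V[u]) Tol⁻²`, the MLMC error bound is strictly below `Tol²`. -/
theorem stmt_9 (L : ℕ) (hL : 1 ≤ L) (q s Tol Vu : ℝ)
    (hq : 0 < q) (hq1 : q < 1) (hs : s < 2) (hTol : 0 < Tol) (hVu : 0 ≤ Vu)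
    (M : ℕ → ℕ) (hMpos : ∀ l, 0 < M l)
    (hM1 : 12 * ((q ^ ((1 : ℝ) - L) * Tol) ^ 2 / 4 + Vu) / Tol ^ 2 ≤ (M 1 : ℝ))
    (hMl : ∀ l, 2 ≤ l → l ≤ L →
      2 * (1 + q⁻¹) ^ 2 * (1 - q ^ ((2 - s) / 2))⁻¹
          * q ^ ((s + 2) / 2 * ((l : ℝ) - 1) + 2 * (1 - (L : ℝ))) ≤ (M l : ℝ)) :
    1 / 2 * (1 + (1 + q⁻¹) ^ 2
        * ∑ l ∈ Finset.Icc 2 L, (M l : ℝ)⁻¹ * q ^ (2 * ((l : ℝ) - L))) * Tol ^ 2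
      + 3 * (M 1 : ℝ)⁻¹ * ((q ^ ((1 : ℝ) - L) * Tol) ^ 2 / 4 + Vu) < Tol ^ 2 :=
  stmt_9_general L q s Tol Vu hq hq1 hs hTol M hM1 hMl
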